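/- arXiv:1304.4013 — 3 statements merged into one kernel-verified Lean document; each statement's English description precedes it below -/
import Mathlib

section
/- Let V be a finite-dimensional real vector space, S ⊆ V a set of nonzero vectors ('curve classes'), and λ, ω : V → ℝ linear functionals with ω(c) ≥ 1 for every c ∈ S. Fix d ∈ ℝ and suppose: for every c ∈ S with λ(c) < -d there exist nonzero elements c₁, c₂ of the additive submonoid generated by S with c = c₁ + c₂ and ω(c₁) ≥ 1, ω(c₂) ≥ 1. Then every element of the additive submonoid generated by S lies in the convex cone { z ∈ V | λ(z) ≥ 0 } + cone generated by { c ∈ S | 0 < -λ(c) ≤ d }. -/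
/-!
Induct on the `ω`-degree, which is at least `1` on every curve class. A class `c` with
`λ(c) ≥ 0` or `0 < -λ(c) ≤ d` already has the required form; otherwise `c` splits as
`c₁ + c₂` with both pieces of degree at most `ω(c) - 1`, and since `ω ≥ 0` on the monoid
generated by `S`, the pieces are sums of classes of smaller degree. The target set is
closed under addition, so it contains all of these sums.
-/

namespace AddSubmonoid

variable {M F : Type*} [AddMonoid M] [FunLike F M ℝ] {S : Set M} {ω : F}

theorem nonneg_of_mem_closure [AddMonoidHomClass F M ℝ] (hω : ∀ c ∈ S, 0 ≤ ω c) {z : M}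
    (hz : z ∈ closure S) : 0 ≤ ω z := by
  induction hz using closure_induction with
  | mem c hc => exact hω c hc
  | zero => simp
  | add x y _ _ hx hy => rw [map_add]; exact add_nonneg hx hy

theorem mem_closure_sublevel_of_mem_closure [AddMonoidHomClass F M ℝ]
    (hω : ∀ c ∈ S, 0 ≤ ω c) {z : M} (hz : z ∈ closure S) {m : ℝ} (hzm : ω z ≤ m) :
    z ∈ closure {c ∈ S | ω c ≤ m} := by
  induction hz using closure_induction with
  | mem c hc => exact subset_closure ⟨hc, hzm⟩
  | zero => exact zero_mem _
  | add x y hx hy ihx ihy =>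
    rw [map_add] at hzm
    have hx0 := nonneg_of_mem_closure hω hx
    have hy0 := nonneg_of_mem_closure hω hy
    exact add_mem (ihx (by linarith)) (ihy (by linarith))

theorem closure_le_of_degree_induction {C : AddSubmonoid M} (hω : ∀ c ∈ S, 1 ≤ ω c)
    (step : ∀ c ∈ S, closure {c' ∈ S | ω c' ≤ ω c - 1} ≤ C → c ∈ C) :
    closure S ≤ C := by
  have hlevel : ∀ n : ℕ, ∀ c ∈ S, ω c ≤ n → c ∈ C := by
    intro n
    induction n with
    | zero => intro c hc hcn; rw [Nat.cast_zero] at hcn; linarith [hω c hc]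
    | succ n ih =>
      refine fun c hc hcn => step c hc (closure_le.2 fun c' ⟨hc', hc'c⟩ => ih c' hc' ?_)
      push_cast at hcn
      linarith
  refine closure_le.2 fun c hc => ?_
  obtain ⟨n, hn⟩ := exists_nat_ge (ω c)
  exact hlevel n c hc hn

end AddSubmonoid

theorem stmt_8_general {V : Type*} [AddCommGroup V] [Module ℝ V]
    (S : Set V)
    (lam ω : V →ₗ[ℝ] ℝ) (hω : ∀ c ∈ S, 1 ≤ ω c) (d : ℝ)
    (hsplit : ∀ c ∈ S, lam c < -d →
      ∃ c₁ ∈ AddSubmonoid.closure S, ∃ c₂ ∈ AddSubmonoid.closure S,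
        c₁ ≠ 0 ∧ c₂ ≠ 0 ∧ c = c₁ + c₂ ∧ 1 ≤ ω c₁ ∧ 1 ≤ ω c₂) :
    ∀ z ∈ AddSubmonoid.closure S,
      ∃ z₁ z₂ : V, 0 ≤ lam z₁ ∧
        z₂ ∈ AddSubmonoid.closure
          { t : V | ∃ r : ℝ, 0 ≤ r ∧ ∃ c ∈ S, 0 < -lam c ∧ -lam c ≤ d ∧ t = r • c } ∧
        z = z₁ + z₂ := by
  set T : Set V :=
    { t : V | ∃ r : ℝ, 0 ≤ r ∧ ∃ c ∈ S, 0 < -lam c ∧ -lam c ≤ d ∧ t = r • c }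
  have hω0 : ∀ c ∈ S, 0 ≤ ω c := fun c hc => zero_le_one.trans (hω c hc)
  have hle : AddSubmonoid.closure S ≤
      (AddSubmonoid.nonneg ℝ).comap lam ⊔ AddSubmonoid.closure T := by
    refine AddSubmonoid.closure_le_of_degree_induction hω fun c hc ih => ?_
    by_cases hpos : 0 ≤ lam c
    · exact AddSubmonoid.mem_sup_left hpos
    by_cases hsmall : -d ≤ lam c
    · exact AddSubmonoid.mem_sup_right <| AddSubmonoid.subset_closure
        ⟨1, zero_le_one, c, hc, by linarith, by linarith, (one_smul ℝ c).symm⟩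
    obtain ⟨c₁, hc₁, c₂, hc₂, -, -, rfl, hω₁, hω₂⟩ := hsplit c hc (by linarith)
    rw [map_add] at ih
    exact add_mem (ih <| AddSubmonoid.mem_closure_sublevel_of_mem_closure hω0 hc₁ (by linarith))
      (ih <| AddSubmonoid.mem_closure_sublevel_of_mem_closure hω0 hc₂ (by linarith))
  intro z hz
  obtain ⟨z₁, hz₁, z₂, hz₂, rfl⟩ := AddSubmonoid.mem_sup.1 (hle hz)
  exact ⟨z₁, z₂, hz₁, hz₂, rfl⟩

/-- Abstract Step 1 of the cone theorem `theoremNE`: every element of the monoid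
generated by the curve classes `S` lies in `{λ ≥ 0}` plus the cone generated by
the classes of `S` with `0 < -λ(c) ≤ d`, given the splitting hypothesis. -/
theorem stmt_8 {V : Type*} [AddCommGroup V] [Module ℝ V] [FiniteDimensional ℝ V]
    (S : Set V) (hS0 : ∀ c ∈ S, c ≠ 0)
    (lam ω : V →ₗ[ℝ] ℝ) (hω : ∀ c ∈ S, 1 ≤ ω c) (d : ℝ)
    (hsplit : ∀ c ∈ S, lam c < -d →
      ∃ c₁ ∈ AddSubmonoid.closure S, ∃ c₂ ∈ AddSubmonoid.closure S,
        c₁ ≠ 0 ∧ c₂ ≠ 0 ∧ c = c₁ + c₂ ∧ 1 ≤ ω c₁ ∧ 1 ≤ ω c₂) :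
    ∀ z ∈ AddSubmonoid.closure S,
      ∃ z₁ z₂ : V, 0 ≤ lam z₁ ∧
        z₂ ∈ AddSubmonoid.closure
          { t : V | ∃ r : ℝ, 0 ≤ r ∧ ∃ c ∈ S, 0 < -lam c ∧ -lam c ≤ d ∧ t = r • c } ∧
        z = z₁ + z₂ :=
  stmt_8_general S lam ω hω d hsplit
end

section
/- Let V be a finite-dimensional real vector space and N ⊆ V a closed convex cone containing no lines. Let λ : V → ℝ and ω : V → ℝ be linear functionals such that ω is strictly positive on N \ {0}. Let (γ_i)_{i ∈ I} be a countable family of elements of N and d > 0 a real number such that 0 < -λ(γ_i) ≤ d for all i, and assume: (1) N is the closure of the cone C := { z ∈ N | λ(z) ≥ 0 } + ∑_{i∈I} ℝ₊ γ_i, and (2) for every ε > 0 the set { i ∈ I | λ(γ_i) + ε·ω(γ_i) < 0 } is finite. Then N = C, i.e. the cone C is already closed. -/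
/-!
A closed cone `K` on which `ω` is strictly positive is generated, as an additive monoid, by its
extremal vectors: subtract from `z ∈ K` the largest multiple of an extreme point of the compact
base `K ∩ {ω = 1}`; the rest lies on the boundary, hence in a supporting hyperplane, and one
recurses in lower dimension. So it suffices that every extremal `v` with `λ v < 0` is a
nonnegative combination of the `γ i`. Take `ε > 0` with `(λ + εω) v < 0` and approximate `v` by
elements of `C`. Only finitely many `γ i` have `(λ + εω)(γ i) < 0`; splitting them off, and
passing to a limit by compactness of `K ∩ {ω ≤ R}`, gives `v = q + p` with `q ∈ K`,
`(λ + εω) q ≥ 0` and `p` in the closed cone spanned by those finitely many `γ i`. Extremality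
makes `q` a nonnegative multiple of `v`, and the sign of `λ + εω` forces `q = 0`.
-/

open Filter Topology Set

namespace ConvexCone

variable {V : Type*} [NormedAddCommGroup V] [NormedSpace ℝ V]

def IsExtremalVector (K : ConvexCone ℝ V) (v : V) : Prop :=
  v ∈ K ∧ ∀ a ∈ K, ∀ b ∈ K, a + b = v → ∃ t : ℝ, a = t • v

lemma IsExtremalVector.smul {K : ConvexCone ℝ V} {v : V} (hv : K.IsExtremalVector v) {t : ℝ}
    (ht : 0 < t) : K.IsExtremalVector (t • v) := by
  refine ⟨K.smul_mem ht hv.1, fun a ha b hb hab => ?_⟩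
  obtain ⟨s, hs⟩ := hv.2 (t⁻¹ • a) (K.smul_mem (inv_pos.2 ht) ha) (t⁻¹ • b)
    (K.smul_mem (inv_pos.2 ht) hb) (by rw [← smul_add, hab, inv_smul_smul₀ ht.ne'])
  exact ⟨s, by rw [smul_comm, ← hs, smul_inv_smul₀ ht.ne']⟩

lemma smul_mem_of_nonneg {K : ConvexCone ℝ V} (h0 : (0 : V) ∈ K) {r : ℝ} (hr : 0 ≤ r) {x : V}
    (hx : x ∈ K) : r • x ∈ K := by
  rcases hr.eq_or_lt with rfl | hr
  · simpa using h0
  · exact K.smul_mem hr hx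

lemma apply_nonneg_of_pos {K : ConvexCone ℝ V} {ω : V →ₗ[ℝ] ℝ}
    (hω : ∀ v ∈ K, v ≠ 0 → 0 < ω v) {v : V} (hv : v ∈ K) : 0 ≤ ω v := by
  rcases eq_or_ne v 0 with rfl | hv0
  · simp
  · exact (hω v hv hv0).le

lemma isExtremalVector_of_mem_extremePoints {K : ConvexCone ℝ V} {ω : V →ₗ[ℝ] ℝ}
    (hω : ∀ v ∈ K, v ≠ 0 → 0 < ω v) {e : V}
    (he : e ∈ ((K : Set V) ∩ ω ⁻¹' {1}).extremePoints ℝ) : K.IsExtremalVector e := by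
  obtain ⟨⟨heK, heω⟩, hext⟩ := he
  refine ⟨heK, fun a ha b hb hab => ?_⟩
  rcases eq_or_ne a 0 with rfl | ha0
  · exact ⟨0, (zero_smul ℝ e).symm⟩
  rcases eq_or_ne b 0 with rfl | hb0
  · exact ⟨1, by rw [one_smul, ← hab, add_zero]⟩
  have hωa := hω a ha ha0
  have hωb := hω b hb hb0
  have hnorm : ∀ x ∈ K, 0 < ω x → (ω x)⁻¹ • x ∈ (K : Set V) ∩ ω ⁻¹' {1} := fun x hx hωx =>
    ⟨K.smul_mem (inv_pos.2 hωx) hx, by simp [hωx.ne']⟩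
  have hseg : e ∈ openSegment ℝ ((ω a)⁻¹ • a) ((ω b)⁻¹ • b) := by
    refine ⟨ω a, ω b, hωa, hωb, ?_, ?_⟩
    · rw [← map_add, hab]; simpa using heω
    · rw [smul_inv_smul₀ hωa.ne', smul_inv_smul₀ hωb.ne', hab]
  refine ⟨ω a, ?_⟩
  rw [← hext (hnorm a ha hωa) (hnorm b hb hωb) hseg, smul_inv_smul₀ hωa.ne']

lemma isExtremalVector_of_comap_ker {K : ConvexCone ℝ V} {g : V →ₗ[ℝ] ℝ}
    (hg : ∀ y ∈ K, g y ≤ 0) {w : LinearMap.ker g}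
    (hw : (K.comap (LinearMap.ker g).subtype).IsExtremalVector w) : K.IsExtremalVector w := by
  refine ⟨hw.1, fun a ha b hb hab => ?_⟩
  have hsum : g a + g b = 0 := by rw [← map_add, hab]; exact w.2
  have hga : g a = 0 := le_antisymm (hg a ha) (by linarith [hg b hb])
  have hgb : g b = 0 := by linarith
  obtain ⟨t, ht⟩ := hw.2 ⟨a, hga⟩ ha ⟨b, hgb⟩ hb (Subtype.ext hab)
  exact ⟨t, congrArg Subtype.val ht⟩

lemma exists_dual_nonpos_of_notMem_interior {K : ConvexCone ℝ V} [FiniteDimensional ℝ V]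
    (h0 : (0 : V) ∈ K) {z : V} (hz : z ∈ K) (hzi : z ∉ interior (K : Set V)) :
    ∃ g : V →ₗ[ℝ] ℝ, g ≠ 0 ∧ (∀ y ∈ K, g y ≤ 0) ∧ g z = 0 := by
  rcases (interior (K : Set V)).eq_empty_or_nonempty with hint | hint
  · have hspan : vectorSpan ℝ (K : Set V) < ⊤ := by
      rw [lt_top_iff_ne_top, Ne,
        ← AffineSubspace.affineSpan_eq_top_iff_vectorSpan_eq_top_of_nonempty ℝ V V ⟨z, hz⟩, ← K.convex.interior_nonempty_iff_affineSpan_eq_top, hint]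
      exact Set.not_nonempty_empty
    obtain ⟨g, hg0, hgK⟩ := Submodule.exists_le_ker_of_lt_top _ hspan
    have hgK' : ∀ y ∈ K, g y = 0 := fun y hy => by
      simpa using hgK (vsub_mem_vectorSpan ℝ hy h0)
    exact ⟨g, hg0, fun y hy => (hgK' y hy).le, hgK' z hz⟩
  · obtain ⟨f, hf0, hfK⟩ := geometric_hahn_banach_of_nonempty_interior_point K.convex hzi hint
    have h2z := hfK _ (K.smul_mem two_pos hz)
    rw [map_smul, smul_eq_mul] at h2z
    have hfz : f z = 0 := le_antisymm (by linarith) (by simpa using hfK 0 h0)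
    refine ⟨f, fun h => hf0 (ContinuousLinearMap.coe_injective (by simpa using h)), ?_, hfz⟩
    exact fun y hy => hfz ▸ hfK y hy

lemma exists_sub_smul_mem_notMem_interior {K : ConvexCone ℝ V} (hK : IsClosed (K : Set V))
    {ω : V →ₗ[ℝ] ℝ} (hω : ∀ v ∈ K, 0 ≤ ω v) {e z : V} (he : 0 < ω e) (hz : z ∈ K) :
    ∃ t : ℝ, 0 ≤ t ∧ z - t • e ∈ K ∧ z - t • e ∉ interior (K : Set V) := by
  have hcont : Continuous fun t : ℝ => z - t • e := by fun_prop
  set T := Ici (0 : ℝ) ∩ (fun t : ℝ => z - t • e) ⁻¹' K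
  have hT : IsCompact T := by
    refine (isCompact_Icc (b := ω z / ω e)).of_isClosed_subset
      (isClosed_Ici.inter (hK.preimage hcont))
      fun t ht => ⟨ht.1, ?_⟩
    have h := hω _ ht.2
    rw [map_sub, map_smul, smul_eq_mul] at h
    exact (le_div_iff₀ he).2 (by linarith : t * ω e ≤ ω z)
  obtain ⟨t, ⟨ht0 : 0 ≤ t, htK⟩, htmax⟩ :=
    hT.exists_isGreatest ⟨0, mem_Ici.2 le_rfl, by simpa using hz⟩
  refine ⟨t, ht0, htK, fun hint => ?_⟩
  have hnear : ∀ᶠ δ in 𝓝[>] (0 : ℝ), z - t • e - δ • e ∈ K :=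
    nhdsWithin_le_nhds <| (Continuous.tendsto' (by fun_prop) 0 _ (by simp)).eventually_mem
      (mem_interior_iff_mem_nhds.1 hint)
  obtain ⟨δ, hδK, hδ : 0 < δ⟩ := (hnear.and self_mem_nhdsWithin).exists
  have := htmax (a := t + δ) ⟨mem_Ici.2 (by linarith), by simpa [sub_sub, add_smul] using hδK⟩
  linarith

variable [FiniteDimensional ℝ V]

lemma exists_pos_mul_norm_le {K : ConvexCone ℝ V} (hK : IsClosed (K : Set V)) {ω : V →ₗ[ℝ] ℝ}
    (hω : ∀ v ∈ K, v ≠ 0 → 0 < ω v) : ∃ c > 0, ∀ v ∈ K, c * ‖v‖ ≤ ω v := by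
  obtain ⟨c, hc, hcS⟩ := ((isCompact_sphere (0 : V) 1).inter_left hK).exists_forall_le'
    ω.continuous_of_finiteDimensional.continuousOn
    fun v hv => hω v hv.1 (ne_zero_of_mem_sphere one_ne_zero ⟨v, hv.2⟩)
  refine ⟨c, hc, fun v hv => ?_⟩
  rcases eq_or_ne v 0 with rfl | hv0
  · simp
  have hnv : 0 < ‖v‖ := norm_pos_iff.2 hv0
  have h := hcS (‖v‖⁻¹ • v) ⟨K.smul_mem (inv_pos.2 hnv) hv, by simp [norm_smul, hnv.ne']⟩
  rw [map_smul, smul_eq_mul, le_inv_mul_iff₀ hnv] at h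
  linarith

lemma isCompact_inter_le {K : ConvexCone ℝ V} (hK : IsClosed (K : Set V)) {ω : V →ₗ[ℝ] ℝ}
    (hω : ∀ v ∈ K, v ≠ 0 → 0 < ω v) (R : ℝ) : IsCompact ((K : Set V) ∩ {v | ω v ≤ R}) := by
  obtain ⟨c, hc, hcK⟩ := exists_pos_mul_norm_le hK hω
  refine Metric.isCompact_of_isClosed_isBounded
    (hK.inter (isClosed_le ω.continuous_of_finiteDimensional continuous_const))
    ((Metric.isBounded_closedBall (x := 0) (r := R / c)).subset fun v hv => ?_)
  rw [mem_closedBall_zero_iff, le_div_iff₀ hc, mul_comm]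
  exact (hcK v hv.1).trans hv.2

theorem subset_closure_isExtremalVector {E : Type*} [NormedAddCommGroup E] [NormedSpace ℝ E]
    [FiniteDimensional ℝ E] (K : ConvexCone ℝ E) (hK : IsClosed (K : Set E)) (ω : E →ₗ[ℝ] ℝ)
    (hω : ∀ v ∈ K, v ≠ 0 → 0 < ω v) :
    (K : Set E) ⊆ AddSubmonoid.closure {v | K.IsExtremalVector v} := by
  induction hn : Module.finrank ℝ E using Nat.strong_induction_on generalizing E with
  | _ n ih =>
  intro z hz
  rcases eq_or_ne z 0 with rfl | hz0
  · exact zero_mem _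
  have h0 : (0 : E) ∈ K := Pointed.of_nonempty_of_isClosed ⟨z, hz⟩ hK
  have hωz := hω z hz hz0
  have hbase : IsCompact ((K : Set E) ∩ ω ⁻¹' {1}) :=
    (isCompact_inter_le hK hω 1).of_isClosed_subset
      (hK.inter (isClosed_singleton.preimage ω.continuous_of_finiteDimensional))
      fun v hv => ⟨hv.1, le_of_eq hv.2⟩
  obtain ⟨e, he⟩ := hbase.extremePoints_nonempty
    ⟨(ω z)⁻¹ • z, K.smul_mem (inv_pos.2 hωz) hz, by simp [hωz.ne']⟩
  have heK := isExtremalVector_of_mem_extremePoints hω he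
  obtain ⟨t, ht, hztK, hzt⟩ := exists_sub_smul_mem_notMem_interior hK
    (fun v hv => apply_nonneg_of_pos hω hv) (he.1.2.symm ▸ one_pos) hz
  obtain ⟨g, hg0, hgK, hgz⟩ := exists_dual_nonpos_of_notMem_interior h0 hztK hzt
  set H := LinearMap.ker g
  have hH : Module.finrank ℝ H < n := hn ▸ Submodule.finrank_lt (mt LinearMap.ker_eq_top.1 hg0)
  have hzH := ih _ hH (K.comap H.subtype) (hK.preimage continuous_subtype_val) (ω ∘ₗ H.subtype)
    (fun w hw hw0 => hω _ hw (by simpa using hw0)) rfl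
    (show ⟨z - t • e, hgz⟩ ∈ K.comap H.subtype from hztK)
  have hface : (H.subtype : H →+ E) '' {w | (K.comap H.subtype).IsExtremalVector w} ⊆
      {v | K.IsExtremalVector v} := by
    rintro _ ⟨w, hw, rfl⟩
    exact isExtremalVector_of_comap_ker hgK hw
  have hzt' : z - t • e ∈ AddSubmonoid.closure {v | K.IsExtremalVector v} :=
    AddSubmonoid.closure_mono hface
      (AddMonoidHom.map_mclosure (H.subtype : H →+ E) _ ▸ AddSubmonoid.mem_map_of_mem _ hzH)
  rw [← sub_add_cancel z (t • e)]
  refine add_mem hzt' ?_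
  rcases ht.eq_or_lt with rfl | ht
  · simp
  · exact AddSubmonoid.subset_closure (heK.smul ht)

end ConvexCone

section ConicSpan

variable {V : Type*} [NormedAddCommGroup V] [NormedSpace ℝ V] {I : Type*}

def conicSpan (γ : I → V) : AddSubmonoid V :=
  AddSubmonoid.closure (⋃ i : I, {t : V | ∃ r : ℝ, 0 ≤ r ∧ t = r • γ i})

def conicHull {ι : Type*} [Fintype ι] (u : ι → V) : Set V :=
  (fun r : ι → ℝ => ∑ i, r i • u i) '' Ici 0

lemma conicHull_subset_conicSpan {ι : Type*} [Fintype ι] (γ : I → V) (f : ι → I) :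
    conicHull (γ ∘ f) ⊆ conicSpan γ := by
  rintro _ ⟨r, hr, rfl⟩
  exact AddSubmonoid.sum_mem _ fun i _ =>
    AddSubmonoid.subset_closure (mem_iUnion.2 ⟨f i, r i, hr i, rfl⟩)

lemma ConvexCone.mem_of_mem_conicSpan {K : ConvexCone ℝ V} (h0 : (0 : V) ∈ K) {γ : I → V} (hγK : ∀ i, γ i ∈ K) {y : V} (hy : y ∈ conicSpan γ) : y ∈ K := by
  induction hy using AddSubmonoid.closure_induction with
  | mem x hx =>
    obtain ⟨i, r, hr, rfl⟩ := mem_iUnion.1 hx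
    exact K.smul_mem_of_nonneg h0 hr (hγK i)
  | zero => exact h0
  | add _ _ _ _ ha hb => exact K.add_mem ha hb

lemma exists_mem_conicHull_add_of_mem_conicSpan {K : ConvexCone ℝ V} (h0 : (0 : V) ∈ K)
    {γ : I → V} (hγK : ∀ i, γ i ∈ K) {f : V →ₗ[ℝ] ℝ} {G : Finset I}
    (hG : ∀ i ∉ G, 0 ≤ f (γ i)) {y : V} (hy : y ∈ conicSpan γ) :
    ∃ p ∈ conicHull (fun i : G => γ i), ∃ q ∈ K, 0 ≤ f q ∧ y = p + q := by
  classical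
  induction hy using AddSubmonoid.closure_induction with
  | mem x hx =>
    obtain ⟨i, r, hr, rfl⟩ := mem_iUnion.1 hx
    by_cases hi : i ∈ G
    · refine ⟨r • γ i, ⟨Pi.single ⟨i, hi⟩ r, ?_, ?_⟩, 0, h0, by simp, by simp⟩
      · exact mem_Ici.2 (Pi.single_nonneg.2 hr)
      · simp [Pi.single_apply]
    · exact ⟨0, ⟨0, mem_Ici.2 le_rfl, by simp⟩, r • γ i, K.smul_mem_of_nonneg h0 hr (hγK i),
        by simpa using mul_nonneg hr (hG i hi), by simp⟩
  | zero => exact ⟨0, ⟨0, mem_Ici.2 le_rfl, by simp⟩, 0, h0, by simp, by simp⟩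
  | add _ _ _ _ ha hb =>
    obtain ⟨p, ⟨r, hr, rfl⟩, q, hqK, hq, rfl⟩ := ha
    obtain ⟨p', ⟨r', hr', rfl⟩, q', hqK', hq', rfl⟩ := hb
    refine ⟨_, ⟨r + r', mem_Ici.2 (add_nonneg hr hr'), rfl⟩, q + q', K.add_mem hqK hqK', ?_, ?_⟩
    · rw [map_add]; exact add_nonneg hq hq'
    · simp only [Pi.add_apply, add_smul, Finset.sum_add_distrib]; abel

variable [FiniteDimensional ℝ V]

lemma isClosed_conicHull {ι : Type*} [Fintype ι] {u : ι → V}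
    {ω : V →ₗ[ℝ] ℝ} (hu : ∀ i, 0 < ω (u i)) : IsClosed (conicHull u) := by
  refine isClosed_of_closure_subset fun x hx => ?_
  have hω : Continuous ω := ω.continuous_of_finiteDimensional
  set R := ω x + 1
  -- near `x` the coefficients are bounded, because `ω` is positive on the generators
  have hbox : conicHull u ∩ {v | ω v < R} ⊆
      (fun r : ι → ℝ => ∑ i, r i • u i) '' Icc 0 (fun i => R / ω (u i)) := by
    rintro _ ⟨⟨r, hr, rfl⟩, hR⟩
    refine ⟨r, ⟨hr, fun i => (le_div_iff₀ (hu i)).2 ?_⟩, rfl⟩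
    calc r i * ω (u i) ≤ ∑ j, r j * ω (u j) :=
          Finset.single_le_sum (fun j _ => mul_nonneg (hr j) (hu j).le) (Finset.mem_univ i)
      _ = ω (∑ j, r j • u j) := by simp
      _ ≤ R := hR.le
  have hxR : x ∈ closure (conicHull u ∩ {v | ω v < R}) := by
    simpa [inter_comm] using (isOpen_lt hω continuous_const).inter_closure ⟨by simp [R], hx⟩
  obtain ⟨r, hr, rfl⟩ := closure_minimal hbox (isCompact_Icc.image (by fun_prop)).isClosed hxR
  exact ⟨r, hr.1, rfl⟩

theorem ConvexCone.IsExtremalVector.mem_conicSpan {K : ConvexCone ℝ V}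
    (hK : IsClosed (K : Set V)) {lam ω : V →ₗ[ℝ] ℝ} (hω : ∀ v ∈ K, v ≠ 0 → 0 < ω v)
    {γ : I → V} (hγK : ∀ i, γ i ∈ K) (hγ0 : ∀ i, γ i ≠ 0)
    (hfin : ∀ ε : ℝ, 0 < ε → {i | lam (γ i) + ε * ω (γ i) < 0}.Finite) {v : V}
    (hv : K.IsExtremalVector v) (hlam : lam v < 0)
    (hvC : v ∈ closure {z | ∃ x ∈ K, 0 ≤ lam x ∧ ∃ y ∈ conicSpan γ, z = x + y}) :
    v ∈ conicSpan γ := by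
  have h0 : (0 : V) ∈ K := Pointed.of_nonempty_of_isClosed ⟨v, hv.1⟩ hK
  have hωv : 0 < ω v := hω v hv.1 (by rintro rfl; simp at hlam)
  set ε := -lam v / (2 * ω v)
  have hε : 0 < ε := div_pos (by linarith) (by linarith)
  set f := lam + ε • ω
  have hfv : f v < 0 := by
    have : ε * ω v = -lam v / 2 := by
      rw [div_mul_eq_mul_div, mul_div_mul_right _ _ hωv.ne']
    simp only [f, LinearMap.add_apply, LinearMap.smul_apply, smul_eq_mul]
    linarith
  set G := (hfin ε hε).toFinset
  have hG : ∀ i ∉ G, 0 ≤ f (γ i) := fun i hi => by simpa [G, f] using hi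
  obtain ⟨c, hcC, hc⟩ := mem_closure_iff_seq_limit.1 hvC
  have hsplit : ∀ n, ∃ p ∈ conicHull (fun i : G => γ i), ∃ q ∈ K, 0 ≤ f q ∧ c n = p + q := by
    intro n
    obtain ⟨x, hxK, hx, y, hy, hxy⟩ := hcC n
    obtain ⟨p, hp, q, hqK, hq, rfl⟩ :=
      exists_mem_conicHull_add_of_mem_conicSpan h0 hγK hG hy
    refine ⟨p, hp, x + q, K.add_mem hxK hqK, ?_, by rw [hxy]; abel⟩
    have := mul_nonneg hε.le (K.apply_nonneg_of_pos hω hxK)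
    simp only [f, map_add, LinearMap.add_apply, LinearMap.smul_apply, smul_eq_mul] at hq ⊢
    linarith
  choose p hp q hqK hqf hpq using hsplit
  have hpK : ∀ n, p n ∈ K := fun n =>
    K.mem_of_mem_conicSpan h0 hγK (conicHull_subset_conicSpan γ Subtype.val (hp n))
  obtain ⟨R, hR⟩ := ((ω.continuous_of_finiteDimensional.tendsto v).comp hc).bddAbove_range
  have hqR : ∀ n, q n ∈ (K : Set V) ∩ {w | ω w ≤ R} := fun n => by
    refine ⟨hqK n, ?_⟩
    have h := hR ⟨n, rfl⟩
    have := K.apply_nonneg_of_pos hω (hpK n)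
    simp only [Function.comp_apply, hpq, map_add] at h
    show ω (q n) ≤ R
    linarith
  obtain ⟨q₀, ⟨hq₀K, -⟩, φ, hφ, hqφ⟩ := (K.isCompact_inter_le hK hω R).tendsto_subseq hqR
  have hpφ : Tendsto (p ∘ φ) atTop (𝓝 (v - q₀)) :=
    ((hc.comp hφ.tendsto_atTop).sub hqφ).congr fun k => by simp [hpq]
  have hp₀ : v - q₀ ∈ conicHull (fun i : G => γ i) :=
    (isClosed_conicHull (u := fun i : G => γ i) fun i => hω _ (hγK i) (hγ0 i)).mem_of_tendsto hpφ
      (Eventually.of_forall fun k => hp _)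
  have hfq₀ : 0 ≤ f q₀ := ge_of_tendsto ((f.continuous_of_finiteDimensional.tendsto q₀).comp hqφ)
    (Eventually.of_forall fun k => hqf _)
  obtain ⟨t, rfl⟩ := hv.2 q₀ hq₀K (v - q₀)
    (K.mem_of_mem_conicSpan h0 hγK (conicHull_subset_conicSpan γ Subtype.val hp₀))
    (add_sub_cancel _ _)
  have ht : t = 0 := by
    have h1 := K.apply_nonneg_of_pos hω hq₀K
    rw [map_smul, smul_eq_mul] at h1 hfq₀
    nlinarith
  simpa [ht] using conicHull_subset_conicSpan γ Subtype.val hp₀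

theorem ConvexCone.subset_add_conicSpan_of_subset_closure {K : ConvexCone ℝ V}
    (hK : IsClosed (K : Set V)) {lam ω : V →ₗ[ℝ] ℝ} (hω : ∀ v ∈ K, v ≠ 0 → 0 < ω v)
    {γ : I → V} (hγK : ∀ i, γ i ∈ K) (hγ0 : ∀ i, γ i ≠ 0)
    (hfin : ∀ ε : ℝ, 0 < ε → {i | lam (γ i) + ε * ω (γ i) < 0}.Finite)
    (hKC : (K : Set V) ⊆ closure {z | ∃ x ∈ K, 0 ≤ lam x ∧ ∃ y ∈ conicSpan γ, z = x + y}) :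
    (K : Set V) ⊆ {z | ∃ x ∈ K, 0 ≤ lam x ∧ ∃ y ∈ conicSpan γ, z = x + y} := by
  intro z hz
  have h0 : (0 : V) ∈ K := Pointed.of_nonempty_of_isClosed ⟨z, hz⟩ hK
  replace hz := K.subset_closure_isExtremalVector hK ω hω hz
  induction hz using AddSubmonoid.closure_induction with
  | mem v hv =>
    by_cases hlam : 0 ≤ lam v
    · exact ⟨v, hv.1, hlam, 0, zero_mem _, (add_zero v).symm⟩
    · exact ⟨0, h0, by simp, v, hv.mem_conicSpan hK hω hγK hγ0 hfin (not_le.1 hlam) (hKC hv.1),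
        (zero_add v).symm⟩
  | zero => exact ⟨0, h0, le_of_eq (map_zero lam).symm, 0, zero_mem _, (add_zero 0).symm⟩
  | add _ _ _ _ ha hb =>
    obtain ⟨x, hx, hlx, y, hy, rfl⟩ := ha
    obtain ⟨x', hx', hlx', y', hy', rfl⟩ := hb
    exact ⟨x + x', K.add_mem hx hx', by rw [map_add]; exact add_nonneg hlx hlx', y + y',
      add_mem hy hy', by abel⟩

end ConicSpan

theorem stmt_9_general {V : Type*} [NormedAddCommGroup V] [NormedSpace ℝ V]
    [FiniteDimensional ℝ V]
    (N : ConvexCone ℝ V) (hN_closed : IsClosed (N : Set V))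
    (lam ω : V →ₗ[ℝ] ℝ)
    (hω : ∀ z ∈ N, z ≠ 0 → 0 < ω z)
    {I : Type*} (γ : I → V) (hγN : ∀ i, γ i ∈ N)
    (d : ℝ) (hγ : ∀ i, 0 < -lam (γ i) ∧ -lam (γ i) ≤ d)
    (C : Set V)
    (hC : C = { z : V | ∃ x ∈ (N : Set V), 0 ≤ lam x ∧
        ∃ y ∈ AddSubmonoid.closure (⋃ i : I, { t : V | ∃ r : ℝ, 0 ≤ r ∧ t = r • γ i }),
          z = x + y })
    (h1 : (N : Set V) = closure C)
    (h2 : ∀ ε : ℝ, 0 < ε → { i : I | lam (γ i) + ε * ω (γ i) < 0 }.Finite) :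
    (N : Set V) = C := by
  subst hC
  refine subset_antisymm (N.subset_add_conicSpan_of_subset_closure hN_closed hω hγN
    (fun i hi => by simpa [hi] using (hγ i).1) h2 h1.le) (subset_closure.trans h1.ge)

/-- Abstract form of Lemma `lemmaclosure`: under the stated hypotheses the cone
`C = {z ∈ N | λ(z) ≥ 0} + ∑ᵢ ℝ₊ γᵢ` is already closed, i.e. equals `N`. -/
theorem stmt_9 {V : Type*} [NormedAddCommGroup V] [NormedSpace ℝ V]
    [FiniteDimensional ℝ V]
    (N : ConvexCone ℝ V) (hN_closed : IsClosed (N : Set V))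
    (hN_lines : ∀ v : V, v ∈ N → -v ∈ N → v = 0)
    (lam ω : V →ₗ[ℝ] ℝ)
    (hω : ∀ z ∈ N, z ≠ 0 → 0 < ω z)
    {I : Type*} [Countable I] (γ : I → V) (hγN : ∀ i, γ i ∈ N)
    (d : ℝ) (hd : 0 < d) (hγ : ∀ i, 0 < -lam (γ i) ∧ -lam (γ i) ≤ d)
    (C : Set V)
    (hC : C = { z : V | ∃ x ∈ (N : Set V), 0 ≤ lam x ∧
        ∃ y ∈ AddSubmonoid.closure (⋃ i : I, { t : V | ∃ r : ℝ, 0 ≤ r ∧ t = r • γ i }),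
          z = x + y })
    (h1 : (N : Set V) = closure C)
    (h2 : ∀ ε : ℝ, 0 < ε → { i : I | lam (γ i) + ε * ω (γ i) < 0 }.Finite) :
    (N : Set V) = C :=
  stmt_9_general N hN_closed lam ω hω γ hγN d hγ C hC h1 h2
end

section
/- Let V be a finite-dimensional real vector space, N ⊆ V a closed convex cone containing no lines, and let N = V' + ℝ₊·γ where V' ⊆ N is a closed convex subcone and ℝ₊·γ (with γ ∈ N ∖ V', γ ≠ 0) is an extremal ray of N not contained in V'. Then there exists a linear functional α : V → ℝ such that α(γ) = 0, α(z) > 0 for all z ∈ V' ∖ {0}, and consequently { z ∈ N | α(z) = 0 } = ℝ₊·γ. -/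
/-!
A negative multiple of `γ` lying in `V'` would give a line in `N`, so the closed salient cone `V'`
meets the line `ℝ γ` only at `0`. The convex hull of `V' ∩ sphere 0 1` is compact (Carathéodory)
and misses `0`, so Hahn–Banach separates it from `ℝ γ`; the separating functional is bounded below
on the line, hence vanishes on it, and has constant sign on the hull, hence on `V' \ {0}`.
-/

open Set

section CompactHull

variable {E : Type*} [NormedAddCommGroup E] [NormedSpace ℝ E] [FiniteDimensional ℝ E]

/-- Carathéodory's theorem, with every convex combination padded to exactly `finrank + 1` points. -/
theorem convexHull_eq_image_stdSimplex_prod (s : Set E) :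
    convexHull ℝ s =
      (fun p : (Fin (Module.finrank ℝ E + 1) → ℝ) × (Fin (Module.finrank ℝ E + 1) → E) =>
        ∑ i, p.1 i • p.2 i) '' (stdSimplex ℝ _ ×ˢ univ.pi fun _ => s) := by
  refine Subset.antisymm (fun x hx => ?_) ?_
  · obtain ⟨s₀, hs₀⟩ := (convexHull_nonempty_iff (𝕜 := ℝ)).1 ⟨x, hx⟩
    obtain ⟨ι, _, z, w, hzs, hz, hw₀, hw₁, rfl⟩ := eq_pos_convex_span_of_mem_convexHull hx
    have hcard : Fintype.card ι ≤ Fintype.card (Fin (Module.finrank ℝ E + 1)) := by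
      simpa using hz.card_le_finrank_succ.trans (Nat.succ_le_succ (Submodule.finrank_le _))
    obtain ⟨e⟩ := Function.Embedding.nonempty_of_card_le hcard
    have hW (j) (hj : j ∉ range e) : Function.extend e w 0 j = 0 :=
      Function.extend_apply' _ _ _ hj
    refine ⟨(Function.extend e w 0, Function.extend e z fun _ => s₀),
      ⟨⟨fun j => ?_, ?_⟩, fun j _ => ?_⟩, ?_⟩
    · by_cases hj : j ∈ range e
      · obtain ⟨i, rfl⟩ := hj
        simpa [e.injective.extend_apply] using (hw₀ i).le
      · simp [hW j hj]
    · rw [← hw₁]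
      exact (Fintype.sum_of_injective e e.injective _ _ hW
        fun i => (e.injective.extend_apply _ _ _).symm).symm
    · by_cases hj : j ∈ range e
      · obtain ⟨i, rfl⟩ := hj
        simpa [e.injective.extend_apply] using hzs (mem_range_self i)
      · simpa [Function.extend_apply' _ _ _ hj] using hs₀
    · exact (Fintype.sum_of_injective e e.injective _ _ (fun j hj => by simp [hW j hj])
        fun i => by simp [e.injective.extend_apply]).symm
  · rintro _ ⟨⟨w, z⟩, ⟨⟨hw₀, hw₁⟩, hz⟩, rfl⟩
    exact mem_convexHull_of_exists_fintype w z hw₀ hw₁ (fun i => hz i (mem_univ i)) rfl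

theorem IsCompact.convexHull {s : Set E} (hs : IsCompact s) : IsCompact (convexHull ℝ s) := by
  rw [convexHull_eq_image_stdSimplex_prod]
  exact ((isCompact_stdSimplex ℝ _).prod (isCompact_univ_pi fun _ => hs)).image (by fun_prop)

end CompactHull

namespace ConvexCone

variable {E : Type*} [AddCommGroup E] [Module ℝ E]

theorem Salient.convex_diff_zero {K : ConvexCone ℝ E} (hK : K.Salient) :
    Convex ℝ ((K : Set E) \ {0}) := by
  rintro x ⟨hxK, hx0⟩ y ⟨hyK, hy0⟩ a b ha hb hab
  rcases ha.eq_or_lt with rfl | ha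
  · simp_all
  rcases hb.eq_or_lt with rfl | hb
  · simp_all
  refine ⟨K.add_mem (K.smul_mem ha hxK) (K.smul_mem hb hyK), fun hsum => ?_⟩
  have hax : a • x ≠ 0 := smul_ne_zero ha.ne' hx0
  refine hK _ (K.smul_mem ha hxK) hax ?_
  rw [neg_eq_of_add_eq_zero_right hsum]
  exact K.smul_mem hb hyK

theorem Salient.eq_zero_of_mem_span_singleton {N K : ConvexCone ℝ E} (hN : N.Salient)
    (hKN : K ≤ N) {γ : E} (hγN : γ ∈ N) (hγK : γ ∉ K) {x : E} (hxK : x ∈ K)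
    (hx : x ∈ Submodule.span ℝ {γ}) : x = 0 := by
  obtain ⟨t, rfl⟩ := Submodule.mem_span_singleton.1 hx
  rcases lt_trichotomy t 0 with ht | rfl | ht
  · by_contra h
    exact hN _ (hKN hxK) h (by simpa [← neg_smul] using N.smul_mem (neg_pos.2 ht) hγN)
  · exact zero_smul ℝ γ
  · exact absurd (by simpa [smul_smul, ht.ne'] using K.smul_mem (inv_pos.2 ht) hxK) hγK

theorem Salient.exists_strongDual_pos_of_eq_zero_on {F : Type*} [NormedAddCommGroup F]
    [NormedSpace ℝ F] [FiniteDimensional ℝ F] {K : ConvexCone ℝ F} (hK : K.Salient)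
    (hKc : IsClosed (K : Set F)) (W : Submodule ℝ F) (hKW : ∀ x ∈ K, x ∈ W → x = 0) :
    ∃ f : StrongDual ℝ F, (∀ w ∈ W, f w = 0) ∧ ∀ x ∈ K, x ≠ 0 → 0 < f x := by
  set S := (K : Set F) ∩ Metric.sphere 0 1
  have hSK : convexHull ℝ S ⊆ (K : Set F) \ {0} :=
    convexHull_min (fun x hx => ⟨hx.1, by rintro rfl; simpa using hx.2⟩) hK.convex_diff_zero
  obtain ⟨f, u, v, hfu, huv, hfv⟩ := geometric_hahn_banach_compact_closed
    (convex_convexHull ℝ S) ((isCompact_sphere 0 1).inter_left hKc).convexHull W.convex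
    W.closed_of_finiteDimensional
    (disjoint_left.2 fun x hxS hxW => (hSK hxS).2 (hKW x (hSK hxS).1 hxW))
  have hfW : ∀ w ∈ W, f w = 0 := by
    intro w hw
    by_contra h
    have := hfv _ (W.smul_mem ((v - 1) / f w) hw)
    rw [map_smul, smul_eq_mul, div_mul_cancel₀ _ h] at this
    linarith
  refine ⟨-f, fun w hw => by simp [hfW w hw], fun x hxK hx0 => ?_⟩
  have hxS : ‖x‖⁻¹ • x ∈ S :=
    ⟨K.smul_mem (by positivity) hxK, by simp [norm_smul, norm_ne_zero_iff.2 hx0]⟩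
  have hfx := hfu _ (subset_convexHull ℝ S hxS)
  have hv : v < 0 := by simpa using hfv 0 W.zero_mem
  rw [map_smul, smul_eq_mul] at hfx
  simpa using neg_of_mul_neg_right (by linarith) (inv_nonneg.2 (norm_nonneg x))

end ConvexCone

theorem stmt_10_general {V : Type*} [NormedAddCommGroup V] [NormedSpace ℝ V]
    [FiniteDimensional ℝ V]
    (N V' : ConvexCone ℝ V)
    (hV'_closed : IsClosed (V' : Set V))
    (hN_lines : ∀ v : V, v ∈ N → -v ∈ N → v = 0)
    (hsub : (V' : Set V) ⊆ (N : Set V))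
    (γ : V) (hγN : γ ∈ N) (hγV' : γ ∉ V')
    (hdecomp : (N : Set V) = { z : V | ∃ x ∈ (V' : Set V), ∃ r : ℝ, 0 ≤ r ∧ z = x + r • γ }) :
    ∃ α : V →ₗ[ℝ] ℝ, α γ = 0 ∧ (∀ z ∈ V', z ≠ 0 → 0 < α z) ∧
      { z ∈ (N : Set V) | α z = 0 } = { z : V | ∃ r : ℝ, 0 ≤ r ∧ z = r • γ } := by
  have hN : N.Salient := fun x hx hx0 hnx => hx0 (hN_lines x hx hnx)
  have hline (x) (hx : x ∈ V') : x ∈ Submodule.span ℝ {γ} → x = 0 :=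
    hN.eq_zero_of_mem_span_singleton hsub hγN hγV' hx
  have h0 : (0 : V) ∈ V' := by
    have hγ : γ ∈ (N : Set V) := hγN
    rw [hdecomp] at hγ
    obtain ⟨x, hx, r, -, hγ⟩ := hγ
    have hxγ : (1 - r) • γ = x := by
      rw [sub_smul, one_smul, eq_sub_of_add_eq hγ.symm]
    simpa [hline x hx (Submodule.mem_span_singleton.2 ⟨1 - r, hxγ⟩)] using hx
  obtain ⟨f, hf_span, hf_pos⟩ := (hN.anti hsub).exists_strongDual_pos_of_eq_zero_on hV'_closed
    (Submodule.span ℝ {γ}) hline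
  have hfγ : f γ = 0 := hf_span γ (Submodule.mem_span_singleton_self γ)
  refine ⟨f, hfγ, hf_pos, ?_⟩
  ext z
  rw [Set.mem_sep_iff, hdecomp]
  constructor
  · rintro ⟨⟨x, hx, r, hr, rfl⟩, hfz⟩
    obtain rfl : x = 0 := by_contra fun hx0 => (hf_pos x hx hx0).ne' (by simpa [hfγ] using hfz)
    exact ⟨r, hr, zero_add _⟩
  · rintro ⟨r, hr, rfl⟩
    exact ⟨⟨0, h0, r, hr, (zero_add _).symm⟩, by simp [hfγ]⟩

/-- Proposition `propositionperp` in abstract form: existence of a supporting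
functional `α` for an extremal ray `ℝ₊ γ` of `N = V' + ℝ₊ γ`. -/
theorem stmt_10 {V : Type*} [NormedAddCommGroup V] [NormedSpace ℝ V]
    [FiniteDimensional ℝ V]
    (N V' : ConvexCone ℝ V)
    (hN_closed : IsClosed (N : Set V)) (hV'_closed : IsClosed (V' : Set V))
    (hN_lines : ∀ v : V, v ∈ N → -v ∈ N → v = 0)
    (hsub : (V' : Set V) ⊆ (N : Set V))
    (γ : V) (hγN : γ ∈ N) (hγV' : γ ∉ V') (hγ0 : γ ≠ 0)
    (hextr : ∀ u ∈ N, ∀ v ∈ N, (∃ r : ℝ, 0 ≤ r ∧ u + v = r • γ) →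
      (∃ r : ℝ, 0 ≤ r ∧ u = r • γ) ∧ (∃ r : ℝ, 0 ≤ r ∧ v = r • γ))
    (hdecomp : (N : Set V) = { z : V | ∃ x ∈ (V' : Set V), ∃ r : ℝ, 0 ≤ r ∧ z = x + r • γ }) :
    ∃ α : V →ₗ[ℝ] ℝ, α γ = 0 ∧ (∀ z ∈ V', z ≠ 0 → 0 < α z) ∧
      { z ∈ (N : Set V) | α z = 0 } = { z : V | ∃ r : ℝ, 0 ≤ r ∧ z = r • γ } :=
  stmt_10_general N V' hV'_closed hN_lines hsub γ hγN hγV' hdecomp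
end
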